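/- arXiv:math/0311289 — 7 statements merged into one kernel-verified Lean document; each statement's English description precedes it below -/
import Mathlib

section
/- Let F = F_{2^f} with trace map τ to F₂, and let (b₁,...,b_f) be a self-complementary basis (τ(bᵢbⱼ) = δᵢⱼ). Define φ: F → ℤ/4ℤ by φ(∑ aᵢbᵢ) = (number of i with aᵢ = 1) mod 4, where aᵢ ∈ F₂. Then for all a, a' ∈ F: φ(a + a') = φ(a) + φ(a') + 2τ(aa'), where τ(aa') ∈ F₂ is lifted to {0,1} ⊂ ℤ/4ℤ. -/
/-!
In coordinates for a self-complementary basis the trace form `τ(a a')` is the dot product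
`∑ aᵢ a'ᵢ` over `𝔽₂`. For single bits, lifting to `{0, 1} ⊆ ℤ/4` gives
`[x + y] = [x] + [y] + 2 [x y]`; summing over the coordinates gives the claim, because
doubling turns the `𝔽₂`-sum `∑ aᵢ a'ᵢ` into the `ℤ/4`-sum of the doubled lifts.
-/

open Finset

theorem LinearMap.BilinForm.apply_eq_sum_repr_mul_repr {R M ι : Type*} [CommRing R]
    [AddCommGroup M] [Module R M] [Fintype ι] [DecidableEq ι] (B : LinearMap.BilinForm R M)
    (b : Module.Basis ι R M) (hb : ∀ i j, B (b i) (b j) = if i = j then 1 else 0) (x y : M) :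
    B x y = ∑ i, b.repr x i * b.repr y i := by
  have hB : LinearMap.BilinForm.toMatrix b B = 1 := by
    ext i j
    simp [LinearMap.BilinForm.toMatrix_apply, hb, Matrix.one_apply]
  rw [← Matrix.toBilin_toMatrix b B, hB, Matrix.toBilin_apply]
  simp [Matrix.one_apply]

theorem ZMod.natCast_val_add_of_zmod_two (x y : ZMod 2) :
    (((x + y).val : ℕ) : ZMod 4)
      = (x.val : ZMod 4) + (y.val : ZMod 4) + 2 * ((x * y).val : ZMod 4) := by
  revert x y; decide

-- Unlike `ZMod.val` itself, `x ↦ 2 * x.val` is additive from `ℤ/2` to `ℤ/4`.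
def ZMod.twoMulVal : ZMod 2 →+ ZMod 4 :=
  AddMonoidHom.mk' (fun x => 2 * (x.val : ZMod 4)) (by decide)

theorem stmt_4_general {F : Type*} [Field F] [Algebra (ZMod 2) F] {f : ℕ}
    (b : Module.Basis (Fin f) (ZMod 2) F)
    (hb : ∀ i j, Algebra.trace (ZMod 2) F (b i * b j) = if i = j then 1 else 0)
    (φ : F → ZMod 4)
    (hφ : ∀ a, φ a = ∑ i, ((b.repr a i).val : ZMod 4)) :
    ∀ a a' : F,
      φ (a + a') = φ a + φ a' + 2 * ((Algebra.trace (ZMod 2) F (a * a')).val : ZMod 4) := by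
  intro a a'
  have htrace : Algebra.trace (ZMod 2) F (a * a') = ∑ i, b.repr a i * b.repr a' i :=
    (Algebra.traceForm (ZMod 2) F).apply_eq_sum_repr_mul_repr b hb a a'
  have hdouble : 2 * ((Algebra.trace (ZMod 2) F (a * a')).val : ZMod 4)
      = ∑ i, 2 * ((b.repr a i * b.repr a' i).val : ZMod 4) := by
    rw [htrace]
    exact map_sum ZMod.twoMulVal _ _
  rw [hφ, hφ, hφ, hdouble, ← sum_add_distrib, ← sum_add_distrib]
  refine sum_congr rfl fun i _ => ?_
  rw [map_add, Finsupp.add_apply, ZMod.natCast_val_add_of_zmod_two]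

theorem stmt_4 {F : Type*} [Field F] [Fintype F] [Algebra (ZMod 2) F] {f : ℕ}
    (hcard : Fintype.card F = 2 ^ f)
    (b : Module.Basis (Fin f) (ZMod 2) F)
    (hb : ∀ i j, Algebra.trace (ZMod 2) F (b i * b j) = if i = j then 1 else 0)
    (φ : F → ZMod 4)
    (hφ : ∀ a, φ a = ∑ i, ((b.repr a i).val : ZMod 4)) :
    ∀ a a' : F,
      φ (a + a') = φ a + φ a' + 2 * ((Algebra.trace (ZMod 2) F (a * a')).val : ZMod 4) :=
  stmt_4_general b hb φ hφ
end

section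
/- A linear code C ⊆ Fⁿ over F = F_{2^f} is doubly-even (∑ᵢ cᵢ = 0 and ∑_{i<j} cᵢcⱼ = 0 for all c ∈ C) if and only if Φ(c) = 0 for all c ∈ C, where Φ(c) = ∑ᵢ φ(cᵢ) ∈ ℤ/4ℤ and φ is the mod-4 weight with respect to a self-complementary basis. -/
/-!
The mod-4 weight satisfies `φ (x + y) = φ x + φ y + 2 τ (x y)`, so summing over the coordinates
gives `Φ c = φ (∑ cᵢ) + 2 τ (∑_{i<j} cᵢ cⱼ)`, which proves one direction. Conversely, apply this
to the codewords `α c`: `φ (α y) + 2 τ (α² S) = 0` for every `α`, where `y = ∑ cᵢ` and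
`S = ∑_{i<j} cᵢ cⱼ`. Modulo 2 the weight is the linear form `x ↦ τ (x ∑ bᵢ)`, so
`τ (α y ∑ bᵢ) = 0` for all `α` and nondegeneracy of the trace form gives `y = 0`. Then
`τ (α² S) = 0` for all `α`; as every element of `F` is a square, `S = 0` likewise.
-/

open Finset

namespace ZMod

def doubling : ZMod 2 →+ ZMod 4 :=
  AddMonoidHom.mk' (fun u => 2 * (u.val : ZMod 4)) (by decide)

lemma doubling_eq_zero_iff (u : ZMod 2) : doubling u = 0 ↔ u = 0 := by revert u; decide

lemma castHom_doubling (u : ZMod 2) :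
    castHom (by norm_num : 2 ∣ 4) (ZMod 2) (doubling u) = 0 := by
  revert u; decide

lemma natCast_val_add (u v : ZMod 2) :
    (((u + v).val : ℕ) : ZMod 4) = (u.val : ZMod 4) + (v.val : ZMod 4) + doubling (u * v) := by
  revert u v; decide

end ZMod

theorem apply_sum_eq_sum_apply_add_pairs {R A ι : Type*} [NonUnitalNonAssocSemiring R]
    [AddCommMonoid A] [LinearOrder ι] (w : R → A) (D : R →+ A) (hw0 : w 0 = 0)
    (hw : ∀ x y, w (x + y) = w x + w y + D (x * y)) (c : ι → R) (s : Finset ι) :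
    w (∑ i ∈ s, c i) =
      ∑ i ∈ s, w (c i) + D (∑ p ∈ (s ×ˢ s).filter (fun p => p.1 < p.2), c p.1 * c p.2) := by
  rw [sum_filter, sum_product]
  induction s using Finset.induction_on_max with
  | empty => simp [hw0]
  | insert a s has ih =>
    have ha : a ∉ s := fun h => lt_irrefl a (has a h)
    have hlt : ∀ i ∈ s, (if i < a then c i * c a else 0) = c i * c a :=
      fun i hi => if_pos (has i hi)
    have hnlt : ∀ j ∈ s, (if a < j then c a * c j else 0) = 0 :=
      fun j hj => if_neg (has j hj).asymm
    simp only [sum_insert ha, lt_irrefl, if_false, zero_add, sum_add_distrib, sum_congr rfl hlt,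
      sum_congr rfl hnlt, sum_const_zero, map_add, ← sum_mul]
    rw [add_comm (c a), hw, ih]
    abel

namespace Module.Basis

variable {K M ι : Type*} [CommRing K] [Nontrivial K] [AddCommGroup M] [Module K M] [Fintype ι]

theorem sum_ne_zero [Nontrivial M] (b : Basis ι K M) : ∑ i, b i ≠ 0 := by
  obtain ⟨i⟩ := b.index_nonempty
  intro h
  have : b.repr (∑ j, b j) i = 1 := by classical simp [map_sum, Finsupp.single_apply]
  simp [h] at this

end Module.Basis

section SelfDual

variable {F ι : Type*} [Field F] [Fintype ι] [DecidableEq ι] [Algebra (ZMod 2) F]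
  (b : Module.Basis ι (ZMod 2) F)

noncomputable def mod4Weight (a : F) : ZMod 4 := ∑ i, ((b.repr a i).val : ZMod 4)

omit [DecidableEq ι] in
theorem mod4Weight_zero : mod4Weight b 0 = 0 := by simp [mod4Weight]

variable (hb : ∀ i j, Algebra.trace (ZMod 2) F (b i * b j) = if i = j then 1 else 0)
include hb

theorem trace_mul_basis (x : F) (i : ι) : Algebra.trace (ZMod 2) F (x * b i) = b.repr x i := by
  conv_lhs => rw [← b.sum_repr x]
  rw [sum_mul, map_sum]
  simp [hb]

theorem trace_mul_eq_sum_repr (x y : F) :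
    Algebra.trace (ZMod 2) F (x * y) = ∑ i, b.repr x i * b.repr y i := by
  conv_lhs => rw [← b.sum_repr y]
  rw [mul_sum, map_sum]
  simp [trace_mul_basis b hb, mul_comm]

theorem mod4Weight_add (x y : F) :
    mod4Weight b (x + y) = mod4Weight b x + mod4Weight b y
      + ZMod.doubling (Algebra.trace (ZMod 2) F (x * y)) := by
  simp only [mod4Weight, trace_mul_eq_sum_repr b hb, map_sum, ← sum_add_distrib, map_add,
    Finsupp.add_apply, ZMod.natCast_val_add]

theorem castHom_mod4Weight (x : F) :
    ZMod.castHom (by norm_num : 2 ∣ 4) (ZMod 2) (mod4Weight b x)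
      = Algebra.trace (ZMod 2) F (x * ∑ i, b i) := by
  simp [mod4Weight, mul_sum, map_sum, trace_mul_basis b hb]

end SelfDual

theorem eq_zero_of_forall_trace_mul_eq_zero (K : Type*) {L : Type*} [Field K] [Field L]
    [Algebra K L] [FiniteDimensional K L] [Algebra.IsSeparable K L] {x : L}
    (h : ∀ y, Algebra.trace K L (x * y) = 0) : x = 0 :=
  (traceForm_nondegenerate K L).1 x h

theorem stmt_7_general {F : Type*} [Field F] [Fintype F] [Algebra (ZMod 2) F] {f n : ℕ}
    (b : Module.Basis (Fin f) (ZMod 2) F)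
    (hb : ∀ i j, Algebra.trace (ZMod 2) F (b i * b j) = if i = j then 1 else 0)
    (φ : F → ZMod 4)
    (hφ : ∀ a, φ a = ∑ i, ((b.repr a i).val : ZMod 4))
    (C : Submodule F (Fin n → F)) :
    (∀ c ∈ C, (∑ i, c i) = 0 ∧
        ∑ p ∈ univ.filter (fun p : Fin n × Fin n => p.1 < p.2), c p.1 * c p.2 = 0)
      ↔ (∀ c ∈ C, ∑ i, φ (c i) = 0) := by
  obtain rfl : φ = mod4Weight b := funext hφ
  have : CharP F 2 := charP_of_injective_algebraMap' (ZMod 2) 2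
  have hΦ (c : Fin n → F) := apply_sum_eq_sum_apply_add_pairs (mod4Weight b)
    (ZMod.doubling.comp (Algebra.trace (ZMod 2) F).toAddMonoidHom) (mod4Weight_zero b)
    (mod4Weight_add b hb) c univ
  simp only [univ_product_univ] at hΦ
  refine ⟨fun h c hc => ?_, fun h c hc => ?_⟩
  · obtain ⟨hsum, hpairs⟩ := h c hc
    have := hΦ c
    rwa [hsum, hpairs, mod4Weight_zero, map_zero, add_zero, eq_comm] at this
  set y := ∑ i, c i
  set S := ∑ p ∈ univ.filter (fun p : Fin n × Fin n => p.1 < p.2), c p.1 * c p.2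
  have hscaled (α : F) :
      mod4Weight b (α * y) = ZMod.doubling (Algebra.trace (ZMod 2) F (α * α * S)) := by
    have := hΦ (α • c)
    rw [h _ (C.smul_mem α hc), zero_add] at this
    simp only [Pi.smul_apply, smul_eq_mul, mul_mul_mul_comm α, ← mul_sum] at this
    exact this
  have hy : y = 0 := by
    refine (mul_eq_zero.mp (eq_zero_of_forall_trace_mul_eq_zero (ZMod 2) fun α => ?_))
      |>.resolve_right b.sum_ne_zero
    have := congrArg (ZMod.castHom (by norm_num : 2 ∣ 4) (ZMod 2)) (hscaled α)
    rw [castHom_mod4Weight b hb, ZMod.castHom_doubling] at this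
    convert this using 2
    ring
  refine ⟨hy, eq_zero_of_forall_trace_mul_eq_zero (ZMod 2) fun β => ?_⟩
  obtain ⟨α, rfl⟩ := isSquare_of_charTwo' β
  have := hscaled α
  rwa [hy, mul_zero, mod4Weight_zero, eq_comm, ZMod.doubling_eq_zero_iff, mul_comm] at this

theorem stmt_7 {F : Type*} [Field F] [Fintype F] [Algebra (ZMod 2) F] {f n : ℕ}
    (hcard : Fintype.card F = 2 ^ f)
    (b : Module.Basis (Fin f) (ZMod 2) F)
    (hb : ∀ i j, Algebra.trace (ZMod 2) F (b i * b j) = if i = j then 1 else 0)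
    (φ : F → ZMod 4)
    (hφ : ∀ a, φ a = ∑ i, ((b.repr a i).val : ZMod 4))
    (C : Submodule F (Fin n → F)) :
    (∀ c ∈ C, (∑ i, c i) = 0 ∧
        ∑ p ∈ univ.filter (fun p : Fin n × Fin n => p.1 < p.2), c p.1 * c p.2 = 0)
      ↔ (∀ c ∈ C, ∑ i, φ (c i) = 0) :=
  stmt_7_general b hb φ hφ C
end

section
/- For r ∈ F = F_{2^f} and c ∈ Fⁿ, Φ(rc) = φ(∑ᵢ rcᵢ) + 2τ(r² ∑_{i<j} cᵢcⱼ), where Φ(c) = ∑ᵢ φ(cᵢ), φ is the mod-4 weight with respect to a self-complementary basis, and τ is the trace to F₂ lifted to {0,1} ⊂ ℤ/4ℤ (note subtraction equals addition in ℤ/4ℤ for 2-torsion elements). -/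
/-! Coordinatewise, `val (s + t) = val s + val t + 2 val (s t)` in `ZMod 4` for bits `s t`;
summed over a trace-orthonormal basis this reads `φ (x + y) = φ x + φ y + 2 τ (x y)`.
A function with a biadditive defect expands over a finite sum into its values plus the defect
over all pairs `i < j`, and with `aᵢ = r cᵢ` the pair term is `2 τ (r² ∑_{i<j} cᵢ cⱼ)`;
it may be moved across the equation because it is `2`-torsion. -/

open Finset

theorem Fin.sum_filter_lt_succ {G : Type*} [AddCommMonoid G] (n : ℕ)
    (g : Fin (n + 1) → Fin (n + 1) → G) :
    ∑ p ∈ univ.filter (fun p : Fin (n + 1) × Fin (n + 1) => p.1 < p.2), g p.1 p.2 =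
      ∑ j : Fin n, g 0 j.succ +
        ∑ p ∈ univ.filter (fun p : Fin n × Fin n => p.1 < p.2), g p.1.succ p.2.succ := by
  simp only [sum_filter, Fintype.sum_prod_type, Fin.sum_univ_succ, if_false, Fin.succ_pos,
    if_true, Fin.succ_lt_succ_iff, Fin.not_lt_zero, zero_add]

theorem map_sum_eq_sum_add_sum_lt {M G : Type*} [AddCommMonoid M] [AddCommMonoid G]
    (q : M → G) (β : M → M →+ G) (hq0 : q 0 = 0) (hq : ∀ x y, q (x + y) = q x + q y + β x y)
    (n : ℕ) (a : Fin n → M) :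
    q (∑ i, a i) = ∑ i, q (a i) +
      ∑ p ∈ univ.filter (fun p : Fin n × Fin n => p.1 < p.2), β (a p.1) (a p.2) := by
  induction n with
  | zero => simp [hq0]
  | succ n ih =>
    rw [Fin.sum_univ_succ, hq, ih, map_sum, Fin.sum_univ_succ,
      Fin.sum_filter_lt_succ _ fun i j => β (a i) (a j)]
    abel

def doubleVal : ZMod 2 →+ ZMod 4 :=
  AddMonoidHom.mk' (fun t => 2 * (t.val : ZMod 4)) (by decide)

theorem doubleVal_apply (t : ZMod 2) : doubleVal t = 2 * (t.val : ZMod 4) := rfl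

theorem doubleVal_add_self (t : ZMod 2) : doubleVal t + doubleVal t = 0 := by
  revert t; decide

theorem val_add_val_eq (s t : ZMod 2) :
    ((s + t).val : ZMod 4) = s.val + t.val + doubleVal (s * t) := by
  revert s t; decide

section Weight

variable {M ι : Type*} [AddCommGroup M] [Module (ZMod 2) M] [Fintype ι]

noncomputable def weight4 (b : Module.Basis ι (ZMod 2) M) (x : M) : ZMod 4 :=
  ∑ i, ((b.repr x i).val : ZMod 4)

theorem weight4_add (b : Module.Basis ι (ZMod 2) M) (x y : M) :
    weight4 b (x + y) = weight4 b x + weight4 b y + doubleVal (∑ i, b.repr x i * b.repr y i) := by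
  simp only [weight4, map_add, Finsupp.add_apply, val_add_val_eq, map_sum, sum_add_distrib]

end Weight

section TraceOrthonormal

variable {A ι : Type*} [CommRing A] [Algebra (ZMod 2) A] [Fintype ι] [DecidableEq ι]
  (b : Module.Basis ι (ZMod 2) A)

theorem Algebra.trace_mul_eq_sum_repr_mul_repr
    (hb : ∀ i j, Algebra.trace (ZMod 2) A (b i * b j) = if i = j then 1 else 0) (x y : A) :
    Algebra.trace (ZMod 2) A (x * y) = ∑ i, b.repr x i * b.repr y i :=
  (Algebra.traceForm (ZMod 2) A).apply_eq_sum_repr_mul_repr b hb x y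

noncomputable def doubleTraceMul (x : A) : A →+ ZMod 4 :=
  doubleVal.comp ((Algebra.trace (ZMod 2) A).toAddMonoidHom.comp (AddMonoidHom.mulLeft x))

theorem doubleTraceMul_apply (x y : A) :
    doubleTraceMul x y = doubleVal (Algebra.trace (ZMod 2) A (x * y)) := rfl

theorem weight4_add_of_trace_orthonormal
    (hb : ∀ i j, Algebra.trace (ZMod 2) A (b i * b j) = if i = j then 1 else 0) (x y : A) :
    weight4 b (x + y) = weight4 b x + weight4 b y + doubleTraceMul x y := by
  rw [weight4_add, doubleTraceMul_apply, Algebra.trace_mul_eq_sum_repr_mul_repr b hb]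

end TraceOrthonormal

theorem stmt_11_general {F : Type*} [Field F] [Algebra (ZMod 2) F] {f : ℕ}
    (b : Module.Basis (Fin f) (ZMod 2) F)
    (hb : ∀ i j, Algebra.trace (ZMod 2) F (b i * b j) = if i = j then 1 else 0)
    (φ : F → ZMod 4)
    (hφ : ∀ a, φ a = ∑ i, ((b.repr a i).val : ZMod 4)) :
    ∀ (n : ℕ) (r : F) (c : Fin n → F),
      ∑ i, φ (r * c i) = φ (∑ i, r * c i) +
        2 * ((Algebra.trace (ZMod 2) F
          (r ^ 2 * ∑ p ∈ univ.filter (fun p : Fin n × Fin n => p.1 < p.2),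
            c p.1 * c p.2)).val : ZMod 4) := by
  intro n r c
  obtain rfl : φ = weight4 b := funext hφ
  have hpairs : ∑ p ∈ univ.filter (fun p : Fin n × Fin n => p.1 < p.2),
      doubleTraceMul (r * c p.1) (r * c p.2) = doubleVal (Algebra.trace (ZMod 2) F
        (r ^ 2 * ∑ p ∈ univ.filter (fun p : Fin n × Fin n => p.1 < p.2), c p.1 * c p.2)) := by
    simp only [doubleTraceMul_apply, mul_sum, map_sum]
    exact sum_congr rfl fun p _ => by ring_nf
  rw [map_sum_eq_sum_add_sum_lt (weight4 b) doubleTraceMul (by simp [weight4])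
    (weight4_add_of_trace_orthonormal b hb) n, hpairs,
    ← doubleVal_apply, add_assoc, doubleVal_add_self, add_zero]

theorem stmt_11 {F : Type*} [Field F] [Fintype F] [Algebra (ZMod 2) F] {f : ℕ}
    (hcard : Fintype.card F = 2 ^ f)
    (b : Module.Basis (Fin f) (ZMod 2) F)
    (hb : ∀ i j, Algebra.trace (ZMod 2) F (b i * b j) = if i = j then 1 else 0)
    (φ : F → ZMod 4)
    (hφ : ∀ a, φ a = ∑ i, ((b.repr a i).val : ZMod 4)) :
    ∀ (n : ℕ) (r : F) (c : Fin n → F),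
      ∑ i, φ (r * c i) = φ (∑ i, r * c i) +
        2 * ((Algebra.trace (ZMod 2) F
          (r ^ 2 * ∑ p ∈ univ.filter (fun p : Fin n × Fin n => p.1 < p.2),
            c p.1 * c p.2)).val : ZMod 4) :=
  stmt_11_general b hb φ hφ
end

section
/- Identifying F = F_{2^f} with F₂^f via a self-complementary basis, a doubly-even code C ⊆ Fⁿ maps to a binary code C' ⊆ F₂^{nf} in which every codeword has Hamming weight divisible by 4. -/
/-!
Let `x i j ∈ {0, 1}` be the `j`-th binary coordinate of `c i` and `s j = ∑ i, x i j` the column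
sums, and let `wt = ∑ j, s j` be the weight of the binary image of `c`. For 0/1 numbers
`s j ^ 2 = s j + 2 ∑_{i<k} x i j x k j`, so summing over `j` gives
`∑ j, s j ^ 2 = wt + 2 ∑_{i<k} ⟨c i, c k⟩`. Each `s j` is even because `∑ i, c i = 0`, and in a
trace-orthonormal basis `⟨c i, c k⟩ = Tr (c i * c k)`, so `∑_{i<k} ⟨c i, c k⟩` is even as well,
being congruent to `Tr (∑_{i<k} c i * c k) = 0`. Hence `4 ∣ wt`.
-/

open Finset

theorem Finset.sq_sum_eq_sum_sq_add_two_mul_sum_lt {ι R : Type*} [Fintype ι] [LinearOrder ι]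
    [CommSemiring R] (x : ι → R) :
    (∑ i, x i) ^ 2 = ∑ i, x i ^ 2 + 2 * ∑ p : ι × ι with p.1 < p.2, x p.1 * x p.2 := by
  have htrichotomy : ∑ p : ι × ι, x p.1 * x p.2 =
      (∑ p : ι × ι with p.1 < p.2, x p.1 * x p.2 + ∑ p : ι × ι with p.2 < p.1, x p.1 * x p.2) +
        ∑ p : ι × ι with p.1 = p.2, x p.1 * x p.2 := by
    rw [← sum_union, ← sum_union]
    · refine sum_congr (ext fun p => ?_) fun _ _ => rfl
      rcases lt_trichotomy p.1 p.2 with h | h | h <;> simp [h]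
    · simp only [disjoint_left, mem_union, mem_filter, mem_univ, true_and]
      rintro p (h | h) h' <;> simp [h'] at h
    · exact disjoint_filter.2 fun _ _ h h' => h.asymm h'
  have hswap : ∑ p : ι × ι with p.2 < p.1, x p.1 * x p.2
      = ∑ p : ι × ι with p.1 < p.2, x p.1 * x p.2 :=
    sum_nbij' Prod.swap Prod.swap (by simp) (by simp) (by simp) (by simp) fun _ _ => mul_comm _ _
  have hdiag : ∑ p : ι × ι with p.1 = p.2, x p.1 * x p.2 = ∑ i, x i ^ 2 := by
    rw [sum_filter, Fintype.sum_prod_type]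
    simp [sq]
  rw [sq, sum_mul_sum, ← Fintype.sum_prod_type', htrichotomy, hswap, hdiag]
  ring

theorem four_dvd_card_ne_zero_of_sum_eq_zero_of_sum_dotProduct_eq_zero {ι κ : Type*} [Fintype ι]
    [LinearOrder ι] [Fintype κ] (u : ι → κ → ZMod 2) (hcol : ∀ j, ∑ i, u i j = 0)
    (hdot : ∑ p : ι × ι with p.1 < p.2, u p.1 ⬝ᵥ u p.2 = 0) :
    4 ∣ #{p : ι × κ | u p.1 p.2 ≠ 0} := by
  have hweight : #{p : ι × κ | u p.1 p.2 ≠ 0} = ∑ j, ∑ i, (u i j).val := by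
    have hind : ∀ a : ZMod 2, (if a ≠ 0 then 1 else 0) = a.val := by decide
    rw [card_filter, Fintype.sum_prod_type, sum_comm]
    simp only [hind]
  have hsq : ∑ j, (∑ i, (u i j).val) ^ 2 = #{p : ι × κ | u p.1 p.2 ≠ 0} +
      2 * ∑ p : ι × ι with p.1 < p.2, ∑ j, (u p.1 j).val * (u p.2 j).val := by
    have hval_sq : ∀ a : ZMod 2, a.val ^ 2 = a.val := by decide
    simp only [sq_sum_eq_sum_sq_add_two_mul_sum_lt, hval_sq]
    rw [sum_add_distrib, ← mul_sum, sum_comm (s := univ.filter _), hweight]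
  have hcol_even : ∀ j, 2 ∣ ∑ i, (u i j).val := fun j =>
    (ZMod.natCast_eq_zero_iff _ 2).1 (by push_cast [ZMod.natCast_val, ZMod.cast_id']; exact hcol j)
  have hdot_even : 2 ∣ ∑ p : ι × ι with p.1 < p.2, ∑ j, (u p.1 j).val * (u p.2 j).val :=
    (ZMod.natCast_eq_zero_iff _ 2).1 (by push_cast [ZMod.natCast_val, ZMod.cast_id']; exact hdot)
  have h4 : 4 ∣ ∑ j, (∑ i, (u i j).val) ^ 2 :=
    dvd_sum fun j _ => by simpa using pow_dvd_pow_of_dvd (hcol_even j) 2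
  rw [hsq] at h4
  exact (Nat.dvd_add_left (mul_dvd_mul_left 2 hdot_even)).1 h4

theorem Module.Basis.apply_eq_repr_dotProduct_repr {ι R M : Type*} [Fintype ι] [DecidableEq ι]
    [CommSemiring R] [AddCommMonoid M] [Module R M] (b : Module.Basis ι R M)
    {B : M →ₗ[R] M →ₗ[R] R} (hB : ∀ i j, B (b i) (b j) = if i = j then 1 else 0) (x y : M) :
    B x y = b.repr x ⬝ᵥ b.repr y := by
  rw [← LinearMap.sum_repr_mul_repr_mul b b, Finsupp.sum_fintype _ _ (by simp)]
  simp [hB, Finsupp.sum_fintype, dotProduct]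

theorem stmt_12_general {F : Type*} [Field F] [Algebra (ZMod 2) F] {f n : ℕ}
    (b : Module.Basis (Fin f) (ZMod 2) F)
    (hb : ∀ i j, Algebra.trace (ZMod 2) F (b i * b j) = if i = j then 1 else 0)
    (C : Submodule F (Fin n → F))
    (hde : ∀ c ∈ C, (∑ i, c i) = 0 ∧
      ∑ p ∈ univ.filter (fun p : Fin n × Fin n => p.1 < p.2), c p.1 * c p.2 = 0) :
    ∀ c ∈ C,
      4 ∣ (univ.filter (fun p : Fin n × Fin f => b.repr (c p.1) p.2 ≠ 0)).card := by
  intro c hc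
  obtain ⟨hsum, hpairs⟩ := hde c hc
  have htrace (x y : F) : Algebra.trace (ZMod 2) F (x * y) = b.repr x ⬝ᵥ b.repr y :=
    b.apply_eq_repr_dotProduct_repr (B := Algebra.traceForm (ZMod 2) F) hb x y
  refine four_dvd_card_ne_zero_of_sum_eq_zero_of_sum_dotProduct_eq_zero
    (fun i => b.repr (c i)) (fun j => ?_) ?_
  · rw [← Finsupp.finsetSum_apply, ← map_sum, hsum, map_zero, Finsupp.zero_apply]
  · simp only [← htrace, ← map_sum, hpairs, map_zero]

theorem stmt_12 {F : Type*} [Field F] [Fintype F] [Algebra (ZMod 2) F] {f n : ℕ}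
    (hcard : Fintype.card F = 2 ^ f)
    (b : Module.Basis (Fin f) (ZMod 2) F)
    (hb : ∀ i j, Algebra.trace (ZMod 2) F (b i * b j) = if i = j then 1 else 0)
    (C : Submodule F (Fin n → F))
    (hde : ∀ c ∈ C, (∑ i, c i) = 0 ∧
      ∑ p ∈ univ.filter (fun p : Fin n × Fin n => p.1 < p.2), c p.1 * c p.2 = 0) :
    ∀ c ∈ C,
      4 ∣ (univ.filter (fun p : Fin n × Fin f => b.repr (c p.1) p.2 ≠ 0)).card :=
  stmt_12_general b hb C hde
end

section
/- Let F = F_{2^f} with f odd. Then the length of any doubly-even self-dual code over F is divisible by 8. -/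
open Finset Complex

private lemma intlemma13 : ∀ (m : ℕ) (a b : ℤ), a^2 + b^2 = 2^(2*m+1) → a^2 = b^2 ∧ a ≠ 0 := by
  intro m
  induction m with
  | zero =>
    intro a b h
    simp at h
    have ha : a^2 ≤ 2 := by nlinarith [sq_nonneg b]
    have hb : b^2 ≤ 2 := by nlinarith [sq_nonneg a]
    have ha' : -2 ≤ a ∧ a ≤ 2 := by constructor <;> nlinarith
    have hb' : -2 ≤ b ∧ b ≤ 2 := by constructor <;> nlinarith
    obtain ⟨h1,h2⟩ := ha'; obtain ⟨h3,h4⟩ := hb'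
    interval_cases a <;> interval_cases b <;> omega
  | succ k ih =>
    intro a b h
    have h8 : (4:ℤ) ∣ 2^(2*(k+1)+1) := by
      rw [show 2*(k+1)+1 = (2*k+1) + 2 by ring, pow_add]
      exact ⟨2^(2*k+1), by ring⟩
    rcases Int.even_or_odd a with ⟨a', rfl⟩ | ⟨a', rfl⟩
    · rcases Int.even_or_odd b with ⟨b', rfl⟩ | ⟨b', rfl⟩
      · have h' : a'^2 + b'^2 = 2^(2*k+1) := by
          have h4 : (4:ℤ) * (a'^2 + b'^2) = 4 * 2^(2*k+1) := by
            rw [show (2:ℤ)^(2*(k+1)+1) = 4 * 2^(2*k+1) by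
              rw [show 2*(k+1)+1 = (2*k+1)+2 by ring, pow_add]; ring] at h
            linarith [h]
          exact mul_left_cancel₀ (by norm_num) h4
        obtain ⟨h1, h2⟩ := ih a' b' h'
        constructor
        · nlinarith
        · intro hc; apply h2; linarith [hc]
      · exfalso
        obtain ⟨c, hc⟩ := h8
        have : (a'+a')^2 + (2*b'+1)^2 = 4*(a'^2 + b'^2 + b') + 1 := by ring
        omega
    · exfalso
      rcases Int.even_or_odd b with ⟨b', rfl⟩ | ⟨b', rfl⟩
      · obtain ⟨c, hc⟩ := h8
        have : (2*a'+1)^2 + (b'+b')^2 = 4*(a'^2 + a' + b'^2) + 1 := by ring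
        omega
      · obtain ⟨c, hc⟩ := h8
        have : (2*a'+1)^2 + (2*b'+1)^2 = 4*(a'^2+a'+b'^2+b') + 2 := by ring
        omega

private def e2x : ZMod 2 →+ ZMod 4 where
  toFun s := 2 * ((s.val : ℕ) : ZMod 4)
  map_zero' := by decide
  map_add' := by decide

private lemma Ipowmod13 (m : ℕ) : (I:ℂ)^(m % 4) = I^m := by
  conv_rhs => rw [show m = 4*(m/4) + m%4 from (Nat.div_add_mod m 4).symm]
  rw [pow_add, pow_mul, I_pow_four, one_pow, one_mul]

private lemma Ipowadd13 (a b : ZMod 4) : (I:ℂ)^(a+b).val = I^a.val * I^b.val := by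
  rw [ZMod.val_add, Ipowmod13, pow_add]

private lemma Ipowsum13 {ι : Type*} (s : Finset ι) (g : ι → ZMod 4) :
    (I:ℂ)^((∑ i ∈ s, g i).val) = ∏ i ∈ s, (I:ℂ)^((g i).val) := by
  classical
  induction s using Finset.induction_on with
  | empty => simp [show ((0 : ZMod 4)).val = 0 from rfl]
  | @insert a s' ha ih => rw [Finset.sum_insert ha, Finset.prod_insert ha, Ipowadd13, ih]

private noncomputable def psix : ZMod 2 → ℂ := fun t => (I:ℂ)^((e2x t).val)

private lemma psix_add (s t : ZMod 2) : psix (s+t) = psix s * psix t := by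
  rw [psix, map_add, Ipowadd13]
  rfl

private lemma psix_zero : psix 0 = 1 := by
  rw [psix, map_zero]; norm_num [show ((0:ZMod 4)).val = 0 from rfl]

private lemma psix_one : psix 1 = -1 := by
  rw [psix]
  rw [show (e2x 1) = 2 from by decide, show ((2:ZMod 4)).val = 2 from rfl]
  simp [pow_two]

private lemma psix_sum {ι : Type*} (s : Finset ι) (g : ι → ZMod 2) :
    psix (∑ i ∈ s, g i) = ∏ i ∈ s, psix (g i) := by
  rw [psix, map_sum, Ipowsum13]; rfl

private lemma cRecIm13 (k : ZMod 4) : (I:ℂ)^k.val =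
    ((if k = 0 then (1:ℤ) else if k = 2 then -1 else 0) : ℤ)
    + ((if k = 1 then (1:ℤ) else if k = 3 then -1 else 0) : ℤ) * I := by
  have hk : k = 0 ∨ k = 1 ∨ k = 2 ∨ k = 3 := by revert k; decide
  rcases hk with rfl | rfl | rfl | rfl
  · rw [show ((0:ZMod 4)).val = 0 from rfl]
    norm_num [show (0:ZMod 4) ≠ 1 from by decide, show (0:ZMod 4) ≠ 2 from by decide,
      show (0:ZMod 4) ≠ 3 from by decide]
  · rw [show ((1:ZMod 4)).val = 1 from rfl]
    norm_num [show (1:ZMod 4) ≠ 0 from by decide, show (1:ZMod 4) ≠ 2 from by decide,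
      show (1:ZMod 4) ≠ 3 from by decide]
  · rw [show ((2:ZMod 4)).val = 2 from rfl]
    norm_num [show (2:ZMod 4) ≠ 0 from by decide, show (2:ZMod 4) ≠ 1 from by decide,
      show (2:ZMod 4) ≠ 3 from by decide, pow_two]
  · rw [show ((3:ZMod 4)).val = 3 from rfl]
    norm_num [show (3:ZMod 4) ≠ 0 from by decide, show (3:ZMod 4) ≠ 1 from by decide,
      show (3:ZMod 4) ≠ 2 from by decide, pow_succ, pow_two]

private lemma double_sum_split13 {ι : Type*} [Fintype ι] [LinearOrder ι] {M : Type*}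
    [AddCommMonoid M] (G : ι → ι → M) :
    ∑ a, ∑ b, G a b = ∑ a, G a a + (∑ p ∈ univ.filter (fun p : ι×ι => p.1 < p.2), G p.1 p.2
      + ∑ p ∈ univ.filter (fun p : ι×ι => p.1 < p.2), G p.2 p.1) := by
  classical
  rw [show (∑ a, ∑ b, G a b) = ∑ p : ι×ι, G p.1 p.2 from
    (Fintype.sum_prod_type (f := fun p : ι×ι => G p.1 p.2)).symm]
  rw [← Finset.sum_filter_add_sum_filter_not univ (fun p : ι×ι => p.1 < p.2)]
  rw [← Finset.sum_filter_add_sum_filter_not (univ.filter (fun p : ι×ι => ¬ p.1 < p.2))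
    (fun p : ι×ι => p.2 < p.1)]
  have h1 : (univ.filter (fun p : ι×ι => ¬ p.1 < p.2)).filter (fun p : ι×ι => p.2 < p.1)
      = (univ.filter (fun p : ι×ι => p.1 < p.2)).image Prod.swap := by
    ext p
    simp only [mem_filter, mem_image, mem_univ, true_and, Finset.filter_filter]
    constructor
    · rintro ⟨h2, h3⟩
      exact ⟨Prod.swap p, by simpa using h3, by simp⟩
    · rintro ⟨q, hq, rfl⟩
      simp [hq, le_of_lt, not_lt.mpr (le_of_lt hq)]
  have h2 : ∑ p ∈ (univ.filter (fun p : ι×ι => ¬ p.1 < p.2)).filter (fun p : ι×ι => p.2 < p.1),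
      G p.1 p.2 = ∑ p ∈ univ.filter (fun p : ι×ι => p.1 < p.2), G p.2 p.1 := by
    rw [h1, Finset.sum_image (by intro x _ y _ h; exact Prod.swap_injective h)]
    rfl
  have h3 : (univ.filter (fun p : ι×ι => ¬ p.1 < p.2)).filter (fun p : ι×ι => ¬ p.2 < p.1)
      = univ.image (fun a => (a, a)) := by
    ext p
    simp only [mem_filter, mem_image, mem_univ, true_and, Finset.filter_filter, not_lt]
    constructor
    · rintro ⟨hle1, hle2⟩
      exact ⟨p.1, Prod.ext rfl (le_antisymm hle2 hle1)⟩
    · rintro ⟨a, rfl⟩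
      simp
  have h4 : ∑ p ∈ (univ.filter (fun p : ι×ι => ¬ p.1 < p.2)).filter (fun p : ι×ι => ¬ p.2 < p.1),
      G p.1 p.2 = ∑ a, G a a := by
    rw [h3, Finset.sum_image (by intro x _ y _ h; exact congrArg Prod.fst h)]
  rw [h2, h4]
  abel

private lemma exists_Q13 {F : Type*} [Field F] [Fintype F] [CharP F 2] [Algebra (ZMod 2) F]
    (T : F →ₗ[ZMod 2] ZMod 2) :
    ∃ Q : F → ZMod 4, ∀ x y : F, Q (x+y) = Q x + Q y + e2x (T (x*y)) := by
  classical
  set v : ZMod 2 → ZMod 4 := fun s => ((s.val : ℕ) : ZMod 4) with hv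
  have hdec1 : ∀ s t : ZMod 2, ∀ u : ZMod 4, v (s+t) * u = v s * u + v t * u + 2 * (v s * v t * u) := by decide
  have hdec2 : ∀ s1 t1 s2 t2 : ZMod 2, ∀ u : ZMod 4,
      2 * (v (s1+t1) * v (s2+t2) * u) = 2*(v s1 * v s2 * u) + 2*(v t1 * v t2 * u) + (2*(v s1 * v t2 * u) + 2*(v t1 * v s2 * u)) := by decide
  have hdec3 : ∀ s t r : ZMod 2, e2x (s * t * r) = 2 * (v s * v t * v r) := by decide
  let B := Module.finBasis (ZMod 2) F
  set d := Module.finrank (ZMod 2) F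
  set X : F → Fin d → ZMod 4 := fun x a => v (B.repr x a) with hX
  set q : Fin d → ZMod 4 := fun a => v (T (B a * B a)) with hq
  set Tp : Fin d × Fin d → ZMod 4 := fun p => v (T (B p.1 * B p.2)) with hTp
  set P : Finset (Fin d × Fin d) := univ.filter (fun p => p.1 < p.2) with hP
  refine ⟨fun x => ∑ a, X x a * q a + ∑ p ∈ P, 2 * (X x p.1 * X x p.2 * Tp p), fun x y => ?_⟩
  have hbil : T (x*y) = ∑ a, ∑ b, (B.repr x a) * (B.repr y b) * T (B a * B b) := by
    conv_lhs => rw [← B.sum_repr x, ← B.sum_repr y]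
    rw [Finset.sum_mul_sum, map_sum]
    refine Finset.sum_congr rfl fun a _ => ?_
    rw [map_sum]
    refine Finset.sum_congr rfl fun b _ => ?_
    rw [smul_mul_assoc, mul_smul_comm, map_smul, map_smul, smul_eq_mul, smul_eq_mul]
    ring
  have hXadd : ∀ a, X (x+y) a = v (B.repr x a + B.repr y a) := by
    intro a; rw [hX]; simp [map_add]
  have hE : e2x (T (x*y)) = ∑ a, 2 * (X x a * X y a * q a)
      + (∑ p ∈ P, 2 * (X x p.1 * X y p.2 * Tp p) + ∑ p ∈ P, 2 * (X x p.2 * X y p.1 * Tp p)) := by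
    rw [hbil, map_sum]
    have : ∀ a : Fin d, e2x (∑ b, (B.repr x a) * (B.repr y b) * T (B a * B b))
        = ∑ b, 2 * (X x a * X y b * v (T (B a * B b))) := by
      intro a; rw [map_sum]
      exact Finset.sum_congr rfl fun b _ => hdec3 _ _ _
    rw [Finset.sum_congr rfl fun a _ => this a]
    rw [double_sum_split13 (fun a b => 2 * (X x a * X y b * v (T (B a * B b))))]
    refine congrArg₂ (· + ·) rfl (congrArg₂ (· + ·) rfl ?_)
    refine Finset.sum_congr rfl fun p _ => ?_
    show 2 * (X x p.2 * X y p.1 * v (T (B p.2 * B p.1))) = _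
    rw [mul_comm (B p.2) (B p.1)]
  rw [hE]
  show (∑ a, X (x+y) a * q a + ∑ p ∈ P, 2 * (X (x+y) p.1 * X (x+y) p.2 * Tp p)) = _
  have hlin : ∑ a, X (x+y) a * q a = ∑ a, (X x a * q a + X y a * q a + 2 * (X x a * X y a * q a)) := by
    refine Finset.sum_congr rfl fun a _ => ?_
    rw [hXadd a, hdec1]
  have hpair : ∑ p ∈ P, 2 * (X (x+y) p.1 * X (x+y) p.2 * Tp p)
      = ∑ p ∈ P, (2*(X x p.1 * X x p.2 * Tp p) + 2*(X y p.1 * X y p.2 * Tp p)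
        + (2*(X x p.1 * X y p.2 * Tp p) + 2*(X y p.1 * X x p.2 * Tp p))) := by
    refine Finset.sum_congr rfl fun p _ => ?_
    rw [hXadd p.1, hXadd p.2, hdec2]
  rw [hlin, hpair]
  simp only [Finset.sum_add_distrib]
  have hcomm : ∑ p ∈ P, 2 * (X x p.2 * X y p.1 * Tp p) = ∑ p ∈ P, 2 * (X y p.1 * X x p.2 * Tp p) := by
    refine Finset.sum_congr rfl fun p _ => by ring
  rw [hcomm]
  abel

private lemma pairsum_insert13 {ι : Type*} [LinearOrder ι] [DecidableEq ι] {M : Type*} [AddCommMonoid M]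
    (g : ι → ι → M) (hsymm : ∀ i j, g i j = g j i) (a : ι) (s : Finset ι) (ha : a ∉ s) :
    ∑ p ∈ ((insert a s) ×ˢ (insert a s)).filter (fun p => p.1 < p.2), g p.1 p.2
      = ∑ p ∈ (s ×ˢ s).filter (fun p => p.1 < p.2), g p.1 p.2 + ∑ i ∈ s, g a i := by
  classical
  rw [Finset.sum_filter, Finset.sum_filter]
  rw [Finset.sum_product, Finset.sum_product]
  rw [Finset.sum_insert ha]
  rw [Finset.sum_insert ha]
  rw [Finset.sum_congr rfl (fun i (hi : i ∈ s) => Finset.sum_insert ha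
    (f := fun j => if i < j then g i j else 0))]
  rw [if_neg (lt_irrefl a), zero_add, Finset.sum_add_distrib]
  have hcomb : ∑ i ∈ s, (if a < i then g a i else 0) + ∑ i ∈ s, (if i < a then g i a else 0)
      = ∑ i ∈ s, g a i := by
    rw [← Finset.sum_add_distrib]
    refine Finset.sum_congr rfl fun i hi => ?_
    have hne : a ≠ i := fun h => ha (h ▸ hi)
    rcases lt_trichotomy a i with h|h|h
    · rw [if_pos h, if_neg (asymm h), add_zero]
    · exact absurd h hne
    · rw [if_neg (asymm h), if_pos h, zero_add, hsymm]
  calc ∑ j ∈ s, (if a < j then g a j else 0)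
      + (∑ i ∈ s, (if i < a then g i a else 0) + ∑ i ∈ s, ∑ j ∈ s, (if i < j then g i j else 0))
      = (∑ i ∈ s, ∑ j ∈ s, (if i < j then g i j else 0))
        + (∑ i ∈ s, (if a < i then g a i else 0) + ∑ i ∈ s, (if i < a then g i a else 0)) := by abel
    _ = _ := by rw [hcomb]

theorem stmt_13 {F : Type*} [Field F] [Fintype F] {f n : ℕ}
    (hcard : Fintype.card F = 2 ^ f) (hf : Odd f)
    (C : Submodule F (Fin n → F))
    (hsd : ∀ v : Fin n → F, v ∈ C ↔ ∀ c ∈ C, ∑ i, c i * v i = 0)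
    (hde : ∀ c ∈ C, (∑ i, c i) = 0 ∧
      ∑ p ∈ univ.filter (fun p : Fin n × Fin n => p.1 < p.2), c p.1 * c p.2 = 0) :
    8 ∣ n := by
  classical
  -- characteristic 2
  haveI hchar2 : CharP F 2 := by
    have hchar := CharP.char_is_prime F (ringChar F)
    have hc0 : ((Fintype.card F : ℕ) : F) = 0 := FiniteField.cast_card_eq_zero F
    have hdvd : ringChar F ∣ 2 ^ f := by
      rw [← CharP.cast_eq_zero_iff F (ringChar F), ← hcard]; exact hc0
    have h2 := Nat.Prime.dvd_of_dvd_pow hchar hdvd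
    have h2' : ringChar F = 2 := (Nat.prime_dvd_prime_iff_eq hchar Nat.prime_two).mp h2
    rw [← h2']; exact ringChar.charP F
  letI : Algebra (ZMod 2) F := ZMod.algebra F 2
  have hd : 0 < Module.finrank (ZMod 2) F := Module.finrank_pos
  set B := Module.finBasis (ZMod 2) F with hB
  set z : F := B ⟨0, hd⟩ with hz
  set T : F →ₗ[ZMod 2] ZMod 2 := B.coord ⟨0, hd⟩ with hT
  have hTz : T z = 1 := by simp [hT, hz, Module.Basis.coord_apply]
  obtain ⟨Q, hQ⟩ := exists_Q13 T
  have hQ0 : Q 0 = 0 := by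
    have h := hQ 0 0
    rw [add_zero, mul_zero, map_zero, map_zero, add_zero] at h
    exact (left_eq_add.mp h)
  set μ : F → ℂ := fun x => I ^ (Q x).val with hμ
  have hμadd : ∀ x y : F, μ (x+y) = μ x * μ y * psix (T (x*y)) := by
    intro x y
    show (I:ℂ) ^ (Q (x+y)).val = _
    rw [hQ, Ipowadd13, Ipowadd13]
    rfl
  have hμ0 : μ 0 = 1 := by
    show (I:ℂ) ^ (Q 0).val = 1
    rw [hQ0, show ((0:ZMod 4)).val = 0 from rfl, pow_zero]
  have hμne : ∀ x : F, μ x ≠ 0 := fun x => pow_ne_zero _ I_ne_zero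
  have hμconj : ∀ x : F, (starRingEnd ℂ) (μ x) * μ x = 1 := by
    intro x
    show (starRingEnd ℂ) ((I:ℂ) ^ (Q x).val) * (I:ℂ) ^ (Q x).val = 1
    rw [map_pow, ← mul_pow]
    simp
  set G : ℂ := ∑ x : F, μ x with hG
  have hshift : ∀ t : F, ∑ x : F, μ (x + t) = G :=
    fun t => Fintype.sum_equiv (Equiv.addRight t) _ _ (fun x => rfl)
  have htwist : ∀ t : F, μ t * ∑ x : F, μ x * psix (T (t * x)) = G := by
    intro t
    rw [Finset.mul_sum]
    have hterm : ∀ x : F, μ t * (μ x * psix (T (t * x))) = μ (x + t) := by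
      intro x
      rw [hμadd x t, mul_comm x t]
      ring
    rw [Finset.sum_congr rfl (fun x _ => hterm x)]
    exact hshift t
  have hTne : ∑ u : F, psix (T u) = 0 := by
    have h1 : ∑ u : F, psix (T (u + z)) = ∑ u : F, psix (T u) :=
      Fintype.sum_equiv (Equiv.addRight z) _ _ (fun x => rfl)
    have h2 : ∀ u : F, psix (T (u + z)) = - psix (T u) := by
      intro u
      rw [map_add, hTz, psix_add, psix_one]
      ring
    rw [Finset.sum_congr rfl (fun u _ => h2 u)] at h1
    rw [Finset.sum_neg_distrib] at h1
    have : (2:ℂ) * ∑ u : F, psix (T u) = 0 := by linear_combination - h1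
    simpa using this
  have hchar_sum : ∀ t : F, t ≠ 0 → ∑ x : F, psix (T (t * x)) = 0 := by
    intro t ht
    have h := Fintype.sum_equiv (Equiv.mulLeft₀ t ht) (fun x => psix (T (t * x)))
      (fun u => psix (T u)) (fun x => rfl)
    rw [h]
    exact hTne
  have hGG : G * (starRingEnd ℂ) G = (Fintype.card F : ℂ) := by
    have expand : G * (starRingEnd ℂ) G = ∑ y : F, ∑ x : F, μ x * psix (T (y * x)) := by
      nth_rewrite 2 [hG]
      rw [map_sum, Finset.mul_sum]
      refine Finset.sum_congr rfl fun y _ => ?_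
      rw [← htwist y]
      calc (μ y * ∑ x : F, μ x * psix (T (y * x))) * (starRingEnd ℂ) (μ y)
          = ((starRingEnd ℂ) (μ y) * μ y) * ∑ x : F, μ x * psix (T (y * x)) := by ring
        _ = ∑ x : F, μ x * psix (T (y * x)) := by rw [hμconj, one_mul]
    rw [expand, Finset.sum_comm]
    have hinner : ∀ x : F, ∑ y : F, μ x * psix (T (y * x)) = μ x * ∑ y : F, psix (T (x * y)) := by
      intro x
      rw [Finset.mul_sum]
      refine Finset.sum_congr rfl fun y _ => ?_
      rw [mul_comm y x]
    rw [Finset.sum_congr rfl (fun x _ => hinner x)]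
    rw [Finset.sum_eq_single 0 (fun x _ hx => by rw [hchar_sum x hx, mul_zero]) (fun h => absurd (mem_univ 0) h)]
    rw [hμ0, one_mul]
    have : ∀ y : F, psix (T ((0:F) * y)) = 1 := by
      intro y
      rw [zero_mul, map_zero, psix_zero]
    rw [Finset.sum_congr rfl (fun y _ => this y), Finset.sum_const, nsmul_eq_mul, mul_one, card_univ]
  -- Q of sums of codewords
  have hQsum : ∀ (s : Finset (Fin n)) (w : Fin n → F),
      Q (∑ i ∈ s, w i) = ∑ i ∈ s, Q (w i)
        + e2x (T (∑ p ∈ (s ×ˢ s).filter (fun p => p.1 < p.2), w p.1 * w p.2)) := by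
    intro s w
    induction s using Finset.induction_on with
    | empty => simp [hQ0]
    | @insert a s' ha ih =>
      rw [Finset.sum_insert ha, hQ, ih, Finset.sum_insert ha]
      have hps := pairsum_insert13 (fun i j => w i * w j) (fun i j => mul_comm _ _) a s' ha
      have hps' : ∑ p ∈ ((insert a s') ×ˢ (insert a s')).filter (fun p => p.1 < p.2), w p.1 * w p.2
          = ∑ p ∈ (s' ×ˢ s').filter (fun p => p.1 < p.2), w p.1 * w p.2 + ∑ i ∈ s', w a * w i := hps
      rw [hps']
      rw [map_add T, map_add e2x]
      have : T (w a * ∑ i ∈ s', w i) = ∑ i ∈ s', T (w a * w i) := by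
        rw [Finset.mul_sum, map_sum]
      rw [this, map_sum e2x]
      rw [map_sum T (fun i => w a * w i) s', map_sum e2x]
      abel
  -- code finset
  set CF : Finset (Fin n → F) := univ.filter (· ∈ C) with hCF
  set N : ℕ := CF.card with hN
  have hmemCF : ∀ c : Fin n → F, c ∈ CF ↔ c ∈ C := by
    intro c; rw [hCF, mem_filter]; simp
  have hN0 : 0 < N := Finset.card_pos.mpr ⟨0, (hmemCF 0).mpr (Submodule.zero_mem C)⟩
  set Φ : (Fin n → F) → ℂ := fun v => ∏ i, μ (v i) with hΦ
  have hΦ1 : ∀ c ∈ CF, Φ c = 1 := by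
    intro c hc
    obtain ⟨h1, h2⟩ := hde c ((hmemCF c).mp hc)
    have hqz : ∑ i, Q (c i) = 0 := by
      have h := hQsum univ c
      rw [Finset.univ_product_univ] at h
      rw [h1, h2, hQ0, map_zero, map_zero, add_zero] at h
      exact h.symm
    show ∏ i, (I:ℂ) ^ (Q (c i)).val = 1
    rw [← Ipowsum13, hqz, show ((0:ZMod 4)).val = 0 from rfl, pow_zero]
  have hΦne : ∀ v : Fin n → F, Φ v ≠ 0 := by
    intro v
    exact Finset.prod_ne_zero_iff.mpr (fun i _ => hμne (v i))
  -- orthogonality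
  have hOrth : ∀ v : Fin n → F,
      ∑ c ∈ CF, psix (T (∑ i, c i * v i)) = if v ∈ C then (N:ℂ) else 0 := by
    intro v
    by_cases hv : v ∈ C
    · rw [if_pos hv]
      have hone : ∀ c ∈ CF, psix (T (∑ i, c i * v i)) = 1 := by
        intro c hc
        rw [(hsd v).mp hv c ((hmemCF c).mp hc), map_zero, psix_zero]
      rw [Finset.sum_congr rfl hone, Finset.sum_const, nsmul_eq_mul, mul_one, hN]
    · rw [if_neg hv]
      have hex : ∃ c0 ∈ C, ∑ i, c0 i * v i ≠ 0 := by
        by_contra h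
        push_neg at h
        exact hv ((hsd v).mpr h)
      obtain ⟨c0, hc0C, hc0⟩ := hex
      set c1 : Fin n → F := ((∑ i, c0 i * v i)⁻¹ * z) • c0 with hc1def
      have hc1C : c1 ∈ C := Submodule.smul_mem _ _ hc0C
      have hipc1 : ∑ i, c1 i * v i = z := by
        rw [hc1def]
        have : ∀ i, (((∑ j, c0 j * v j)⁻¹ * z) • c0) i * v i
            = ((∑ j, c0 j * v j)⁻¹ * z) * (c0 i * v i) := by
          intro i
          simp only [Pi.smul_apply, smul_eq_mul, mul_assoc]
        rw [Finset.sum_congr rfl (fun i _ => this i), ← Finset.mul_sum]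
        rw [mul_comm ((∑ j, c0 j * v j)⁻¹) z, mul_assoc, inv_mul_cancel₀ hc0, mul_one]
      have hT1 : T (∑ i, c1 i * v i) = 1 := by rw [hipc1]; exact hTz
      have hflip : ∀ c : Fin n → F, psix (T (∑ i, (c + c1) i * v i))
          = - psix (T (∑ i, c i * v i)) := by
        intro c
        have hsplit : ∑ i, (c + c1) i * v i = (∑ i, c i * v i) + (∑ i, c1 i * v i) := by
          rw [← Finset.sum_add_distrib]
          refine Finset.sum_congr rfl fun i _ => ?_
          simp [add_mul]
        rw [hsplit, map_add, psix_add, hT1, psix_one]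
        ring
      have hbij : ∑ c ∈ CF, psix (T (∑ i, (c + c1) i * v i))
          = ∑ c ∈ CF, psix (T (∑ i, c i * v i)) := by
        refine Finset.sum_nbij' (fun c => c + c1) (fun c => c + c1) ?_ ?_ ?_ ?_ ?_
        · intro c hc
          exact (hmemCF _).mpr (Submodule.add_mem C ((hmemCF c).mp hc) hc1C)
        · intro c hc
          exact (hmemCF _).mpr (Submodule.add_mem C ((hmemCF c).mp hc) hc1C)
        · intro c _
          funext i
          show c i + c1 i + c1 i = c i
          rw [add_assoc, CharTwo.add_self_eq_zero, add_zero]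
        · intro c _
          funext i
          show c i + c1 i + c1 i = c i
          rw [add_assoc, CharTwo.add_self_eq_zero, add_zero]
        · intro c _
          rfl
      rw [Finset.sum_congr rfl (fun c _ => hflip c)] at hbij
      rw [Finset.sum_neg_distrib] at hbij
      have h2 : (2:ℂ) * ∑ c ∈ CF, psix (T (∑ i, c i * v i)) = 0 := by linear_combination - hbij
      simpa using h2
  -- Poisson double counting
  set W : ℂ := ∑ v : Fin n → F, Φ v * ∑ c ∈ CF, psix (T (∑ i, c i * v i)) with hW
  have hW2 : W = (N:ℂ) * N := by
    rw [hW]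
    rw [Finset.sum_congr rfl (fun v _ => by rw [hOrth v])]
    rw [Finset.sum_congr rfl (fun v (_ : v ∈ univ) => mul_ite (v ∈ C) (Φ v) ((N:ℂ)) 0)]
    simp only [mul_zero]
    rw [← Finset.sum_filter]
    rw [Finset.sum_congr rfl (fun v hv => by rw [hΦ1 v hv, one_mul])]
    rw [Finset.sum_const, nsmul_eq_mul]
  have hW1 : W = (N:ℂ) * G^n := by
    rw [hW]
    have hswap : ∑ v : Fin n → F, Φ v * ∑ c ∈ CF, psix (T (∑ i, c i * v i))
        = ∑ c ∈ CF, ∑ v : Fin n → F, Φ v * psix (T (∑ i, c i * v i)) := by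
      rw [Finset.sum_congr rfl (fun v (_ : v ∈ univ) => Finset.mul_sum CF _ (Φ v))]
      exact Finset.sum_comm
    rw [hswap]
    have hinner : ∀ c ∈ CF, ∑ v : Fin n → F, Φ v * psix (T (∑ i, c i * v i)) = G^n := by
      intro c hc
      have hterm : ∀ v : Fin n → F, Φ v * psix (T (∑ i, c i * v i))
          = ∏ i, (μ (v i) * psix (T (c i * v i))) := by
        intro v
        rw [map_sum T, psix_sum, hΦ, ← Finset.prod_mul_distrib]
      rw [Finset.sum_congr rfl (fun v _ => hterm v)]
      rw [← Fintype.prod_sum (fun i (x : F) => μ x * psix (T (c i * x)))]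
      have hfac : ∀ i : Fin n, ∑ x : F, μ x * psix (T (c i * x)) = (μ (c i))⁻¹ * G := by
        intro i
        rw [← htwist (c i), inv_mul_cancel_left₀ (hμne _)]
      rw [Finset.prod_congr rfl (fun i _ => hfac i)]
      rw [Finset.prod_mul_distrib, Finset.prod_inv_distrib]
      have : ∏ i : Fin n, μ (c i) = 1 := hΦ1 c hc
      rw [this, inv_one, one_mul, Finset.prod_const, card_univ, Fintype.card_fin]
    rw [Finset.sum_congr rfl hinner, Finset.sum_const, nsmul_eq_mul]
  have hNne : (N:ℂ) ≠ 0 := Nat.cast_ne_zero.mpr hN0.ne'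
  have hGn : G^n = (N:ℂ) := by
    have h := hW1.symm.trans hW2
    exact mul_left_cancel₀ hNne h
  -- decompose G into integers
  set a : ℤ := ∑ x : F, (if Q x = 0 then (1:ℤ) else if Q x = 2 then -1 else 0) with ha
  set b : ℤ := ∑ x : F, (if Q x = 1 then (1:ℤ) else if Q x = 3 then -1 else 0) with hb
  have hGab : G = (a:ℂ) + (b:ℂ) * I := by
    rw [hG]
    rw [Finset.sum_congr rfl (fun x (_ : x ∈ univ) => cRecIm13 (Q x))]
    rw [Finset.sum_add_distrib, ← Finset.sum_mul]
    rw [ha, hb]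
    push_cast
    ring
  have hab2 : a^2 + b^2 = 2^f := by
    have h1 : G * (starRingEnd ℂ) G = ((a^2 + b^2 : ℤ) : ℂ) := by
      have hconj : (starRingEnd ℂ) G = (a:ℂ) - (b:ℂ)*I := by
        rw [hGab, map_add, map_mul, Complex.conj_I, map_intCast, map_intCast]
        ring
      rw [hconj, hGab]
      push_cast
      linear_combination (-((b:ℂ)^2)) * Complex.I_sq
    have h2 := h1.symm.trans hGG
    rw [hcard] at h2
    exact_mod_cast h2
  obtain ⟨m, hm⟩ := hf
  have hint := intlemma13 m a b (by rw [hab2, hm])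
  obtain ⟨hsq, ha0⟩ := hint
  have hb0 : b ≠ 0 := by
    intro h
    apply ha0
    rw [h] at hsq
    exact sq_eq_zero_iff.mp (by simpa using hsq)
  set cc : ℤ := 2 * a * b with hcc_def
  have hcc : cc ≠ 0 := by
    rw [hcc_def]
    exact mul_ne_zero (mul_ne_zero two_ne_zero ha0) hb0
  have hsqC : (a:ℂ)^2 = (b:ℂ)^2 := by exact_mod_cast congrArg (Int.cast : ℤ → ℂ) hsq
  have hG2 : G^2 = (cc:ℂ) * I := by
    rw [hGab, hcc_def]
    push_cast
    linear_combination hsqC + (b:ℂ)^2 * Complex.I_sq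
  -- powers of cc * I
  have hsq2 : ((cc:ℂ) * I)^2 = -((cc:ℂ)^2) := by
    rw [mul_pow, Complex.I_sq]
    ring
  have hevenpow : ∀ j : ℕ, ((cc:ℂ) * I)^(2*j) = ((cc^(2*j) * (-1)^j : ℤ) : ℂ) := by
    intro j
    rw [pow_mul, hsq2, neg_pow, ← pow_mul]
    push_cast
    ring
  have hoddpow : ∀ j : ℕ, ((cc:ℂ) * I)^(2*j+1) = ((cc^(2*j+1) * (-1)^j : ℤ) : ℂ) * I := by
    intro j
    rw [pow_succ, hevenpow j]
    push_cast
    ring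
  have himzero : ∀ (y : ℤ) (M : ℕ), ((y:ℂ) * I = ((M:ℕ):ℂ)) → y = 0 := by
    intro y M hEq
    have him := congrArg Complex.im hEq
    rw [Complex.mul_im, Complex.I_re, Complex.I_im, Complex.intCast_re, Complex.intCast_im,
      Complex.natCast_im] at him
    simp only [mul_one, mul_zero, add_zero, zero_add] at him
    exact_mod_cast him
  -- step 1 : n is even
  have hGnn : (G^2)^n = (((N^2 : ℕ)):ℂ) := by
    rw [← pow_mul, mul_comm 2 n, pow_mul, hGn]
    push_cast
    ring
  rcases Nat.even_or_odd n with hev | hodd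
  swap
  · exfalso
    obtain ⟨j, hj⟩ := hodd
    rw [hj, hG2, hoddpow j] at hGnn
    have hz' := himzero _ _ hGnn
    exact (mul_ne_zero (pow_ne_zero _ hcc) (pow_ne_zero _ (by norm_num : (-1:ℤ) ≠ 0))) hz'
  obtain ⟨r, hr⟩ := hev
  have hGr : ((cc:ℂ) * I)^r = ((N:ℕ):ℂ) := by
    rw [← hG2, ← pow_mul]
    rw [show 2 * r = n from by omega, hGn]
  rcases Nat.even_or_odd r with hev1 | hodd1
  swap
  · exfalso
    obtain ⟨j, hj⟩ := hodd1
    rw [hj, hoddpow j] at hGr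
    have hz' := himzero _ _ hGr
    exact (mul_ne_zero (pow_ne_zero _ hcc) (pow_ne_zero _ (by norm_num : (-1:ℤ) ≠ 0))) hz'
  obtain ⟨m2, hm2⟩ := hev1
  have hGr2 : ((cc:ℂ) * I)^(2*m2) = ((N:ℕ):ℂ) := by rw [show 2*m2 = r from by omega, hGr]
  rw [hevenpow m2] at hGr2
  have hIntEq : cc^(2*m2) * (-1)^m2 = (N:ℤ) := by exact_mod_cast hGr2
  rcases Nat.even_or_odd m2 with hev2 | hodd2
  · obtain ⟨m3, hm3⟩ := hev2
    exact ⟨m3, by omega⟩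
  · exfalso
    obtain ⟨j, hj⟩ := hodd2
    have hneg : ((-1:ℤ))^m2 = -1 := by
      rw [hj, pow_succ, pow_mul]
      norm_num
    rw [hneg] at hIntEq
    have hpos : 0 < cc^(2*m2) := by
      have h1 : cc^(2*m2) = (cc^m2)^2 := by rw [← pow_mul]; ring_nf
      have h2 : (cc^m2) ≠ 0 := pow_ne_zero _ hcc
      rw [h1]
      exact lt_of_le_of_ne (sq_nonneg _) (Ne.symm (pow_ne_zero 2 h2))
    have hN1 : (1:ℤ) ≤ (N:ℤ) := by exact_mod_cast hN0
    linarith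
end

section
/- If C ⊆ Fⁿ is a self-dual code over F = F_{2^f}, then its complete weight enumerator cwe(C) = ∑_{c∈C} ∏ᵢ x_{cᵢ} is invariant under the MacWilliams transformation h(x_a) = 2^{-f/2} ∑_b (-1)^{τ(ab)} x_b (applied as a ℂ-algebra endomorphism), and under each substitution m_r(x_a) = x_{ar} for r ∈ F*. -/
open Finset MvPolynomial

/-- The MacWilliams transformation `h` on `ℂ[x_a : a ∈ F]`. -/
noncomputable def macWilliams (F : Type*) [Field F] [Fintype F] [Algebra (ZMod 2) F] :
    MvPolynomial F ℂ →ₐ[ℂ] MvPolynomial F ℂ :=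
  MvPolynomial.aeval fun a =>
    MvPolynomial.C ((Real.sqrt (Fintype.card F) : ℂ))⁻¹ *
      ∑ b : F, MvPolynomial.C ((-1 : ℂ) ^ (Algebra.trace (ZMod 2) F (a * b)).val) *
        MvPolynomial.X b

/-- The complete weight enumerator of a code `C ⊆ Fⁿ`. -/
noncomputable def cwe {F : Type*} [Field F] [Fintype F] {n : ℕ}
    (C : Submodule F (Fin n → F)) [DecidablePred (· ∈ C)] : MvPolynomial F ℂ :=
  ∑ c ∈ Finset.univ.filter (fun c : Fin n → F => c ∈ C), ∏ i, MvPolynomial.X (c i)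

section chi
variable {F : Type*} [Field F] [Fintype F] [Algebra (ZMod 2) F]

noncomputable def chi (a : F) : ℂ := (-1 : ℂ) ^ (Algebra.trace (ZMod 2) F a).val

omit [Fintype F] in
lemma chi_def (a : F) :
    chi a = (-1 : ℂ) ^ (Algebra.trace (ZMod 2) F a).val := rfl

omit [Fintype F] in
lemma chi_zero : chi (0 : F) = 1 := by simp [chi]

lemma neg_one_pow_val (x y : ZMod 2) :
    ((-1 : ℂ)) ^ ((x + y).val) = (-1) ^ x.val * (-1) ^ y.val := by
  rw [ZMod.val_add, ← neg_one_pow_eq_pow_mod_two, pow_add]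

omit [Fintype F] in
lemma chi_add (a b : F) : chi (a + b) = chi a * chi b := by
  unfold chi; rw [map_add]; exact neg_one_pow_val _ _

omit [Fintype F] in
lemma chi_sum {ι : Type*} (s : Finset ι) (g : ι → F) :
    chi (∑ i ∈ s, g i) = ∏ i ∈ s, chi (g i) := by
  classical
  induction s using Finset.cons_induction with
  | empty => simp [chi_zero]
  | cons a s ha ih => rw [Finset.sum_cons, Finset.prod_cons, chi_add, ih]

lemma exists_tr_one : ∃ t : F, Algebra.trace (ZMod 2) F t = 1 := by
  haveI : Module.Finite (ZMod 2) F := Module.Finite.of_finite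
  exact Algebra.trace_surjective (ZMod 2) F 1

omit [Fintype F] in
lemma chi_tr_one {t : F} (ht : Algebra.trace (ZMod 2) F t = 1) : chi t = -1 := by
  simp [chi, ht, ZMod.val_one]

lemma sum_chi : ∑ b : F, chi b = 0 := by
  obtain ⟨t, ht⟩ := exists_tr_one (F := F)
  have h1 : ∑ b : F, chi (b + t) = ∑ b : F, chi b := by
    simpa using Equiv.sum_comp (Equiv.addRight t) chi
  have h2 : ∑ b : F, chi (b + t) = -∑ b : F, chi b := by
    simp [chi_add, chi_tr_one ht]
  rw [h2] at h1
  linear_combination (-1/2 : ℂ) * h1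

end chi

noncomputable def dotForm (F : Type*) [Field F] (n : ℕ) :
    LinearMap.BilinForm F (Fin n → F) :=
  LinearMap.mk₂ F (fun c v => ∑ i, c i * v i)
    (fun m₁ m₂ v => by simp [add_mul, Finset.sum_add_distrib])
    (fun a m v => by simp [Finset.mul_sum, mul_assoc])
    (fun m v₁ v₂ => by simp [mul_add, Finset.sum_add_distrib])
    (fun a m v => by simp [Finset.mul_sum, mul_assoc, mul_left_comm])

lemma dotForm_apply {F : Type*} [Field F] {n : ℕ} (c v : Fin n → F) :
    dotForm F n c v = ∑ i, c i * v i := rfl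

lemma dotForm_refl {F : Type*} [Field F] {n : ℕ} : (dotForm F n).IsRefl := by
  intro x y h
  rw [dotForm_apply] at h ⊢
  rw [← h]
  exact Finset.sum_congr rfl fun i _ => mul_comm _ _

lemma dotForm_nondeg {F : Type*} [Field F] {n : ℕ} : (dotForm F n).Nondegenerate := by
  constructor <;> intro x h <;> funext j <;>
  · have := h (Pi.single j 1)
    rw [dotForm_apply] at this
    simpa [Pi.single_apply, mul_ite, ite_mul, Finset.sum_ite_eq', Finset.sum_ite_eq] using this

lemma card_self_dual {F : Type*} [Field F] [Fintype F] {n : ℕ}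
    (C : Submodule F (Fin n → F)) [DecidablePred (· ∈ C)]
    (hsd : ∀ v : Fin n → F, v ∈ C ↔ ∀ c ∈ C, ∑ i, c i * v i = 0) :
    (Finset.univ.filter (fun c : Fin n → F => c ∈ C)).card ^ 2 = Fintype.card F ^ n := by
  classical
  have hC : (dotForm F n).orthogonal C = C := by
    ext v
    rw [LinearMap.BilinForm.mem_orthogonal_iff, hsd v]
    rfl
  have hfr := LinearMap.BilinForm.finrank_add_finrank_orthogonal
      (B := dotForm F n) dotForm_refl C
  rw [hC, LinearMap.BilinForm.orthogonal_top_eq_bot dotForm_nondeg, inf_bot_eq,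
    finrank_bot, add_zero, Module.finrank_fin_fun] at hfr
  have hcard : Fintype.card C = Fintype.card F ^ Module.finrank F C :=
    Module.card_eq_pow_finrank
  have hfilter : (Finset.univ.filter (fun c : Fin n → F => c ∈ C)).card
      = Fintype.card C := (Fintype.card_subtype _).symm
  rw [hfilter, hcard, ← pow_mul, mul_two, hfr]

theorem stmt_15 {F : Type*} [Field F] [Fintype F] [Algebra (ZMod 2) F] {f n : ℕ}
    (hcard : Fintype.card F = 2 ^ f)
    (C : Submodule F (Fin n → F)) [DecidablePred (· ∈ C)]
    (hsd : ∀ v : Fin n → F, v ∈ C ↔ ∀ c ∈ C, ∑ i, c i * v i = 0) :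
    macWilliams F (cwe C) = cwe C ∧
      ∀ r : F, r ≠ 0 →
        (MvPolynomial.aeval fun a : F => MvPolynomial.X (a * r) :
          MvPolynomial F ℂ →ₐ[ℂ] MvPolynomial F ℂ) (cwe C) = cwe C := by
  classical
  set S := Finset.univ.filter (fun c : Fin n → F => c ∈ C) with hS
  constructor
  · -- MacWilliams invariance
    set r : ℂ := (((Real.sqrt (Fintype.card F) : ℝ) : ℂ))⁻¹ with hr
    -- the character sum over the code
    have hA : ∀ v : Fin n → F,
        (∑ c ∈ S, chi (∑ i, c i * v i)) = if v ∈ C then (S.card : ℂ) else 0 := by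
      intro v
      by_cases hv : v ∈ C
      · rw [if_pos hv]
        rw [Finset.sum_congr rfl (fun c hc => by
          rw [(hsd v).mp hv c (Finset.mem_filter.mp hc).2, chi_zero])]
        simp
      · rw [if_neg hv]
        have hex : ∃ c ∈ C, ∑ i, c i * v i ≠ 0 := by
          by_contra h; push_neg at h; exact hv ((hsd v).mpr h)
        obtain ⟨c₁, hc₁, hs⟩ := hex
        obtain ⟨t, ht⟩ := exists_tr_one (F := F)
        set c₀ := (t * (∑ i, c₁ i * v i)⁻¹) • c₁ with hc₀def
        have hc₀C : c₀ ∈ C := Submodule.smul_mem _ _ hc₁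
        have hdot : ∑ i, c₀ i * v i = t := by
          simp only [hc₀def, Pi.smul_apply, smul_eq_mul, mul_assoc, ← Finset.mul_sum]
          field_simp
        have key : ∑ c ∈ S, chi (∑ i, (c + c₀) i * v i)
            = ∑ c ∈ S, chi (∑ i, c i * v i) := by
          refine Finset.sum_nbij' (i := fun c => c + c₀) (j := fun c => c - c₀)
            ?_ ?_ ?_ ?_ ?_
          · intro a ha
            simp only [hS, Finset.mem_filter, Finset.mem_univ, true_and] at ha ⊢
            exact C.add_mem ha hc₀C
          · intro a ha
            simp only [hS, Finset.mem_filter, Finset.mem_univ, true_and] at ha ⊢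
            exact C.sub_mem ha hc₀C
          · intro a _; simp
          · intro a _; simp
          · intro a _; rfl
        have key2 : ∀ c : Fin n → F,
            chi (∑ i, (c + c₀) i * v i) = -chi (∑ i, c i * v i) := by
          intro c
          have h1 : ∑ i, (c + c₀) i * v i = (∑ i, c i * v i) + (∑ i, c₀ i * v i) := by
            simp [add_mul, Finset.sum_add_distrib]
          rw [h1, chi_add, hdot, chi_tr_one ht, mul_neg_one]
        rw [Finset.sum_congr rfl (fun c _ => key2 c), Finset.sum_neg_distrib] at key
        linear_combination (-1/2 : ℂ) * key
    -- the scalar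
    have hsqn : Real.sqrt (Fintype.card F) ^ n = (S.card : ℝ) := by
      have hnn : (0:ℝ) ≤ Real.sqrt (Fintype.card F) ^ n := by positivity
      have h1 : (Real.sqrt (Fintype.card F) ^ n) ^ 2 = ((S.card : ℝ)) ^ 2 := by
        rw [← pow_mul, mul_comm, pow_mul, Real.sq_sqrt (by positivity : (0:ℝ) ≤ (Fintype.card F : ℝ))]
        exact_mod_cast (card_self_dual C hsd).symm
      rw [← Real.sqrt_sq hnn, h1, Real.sqrt_sq (Nat.cast_nonneg _)]
    have hSne : (S.card : ℂ) ≠ 0 := by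
      have : (0 : Fin n → F) ∈ S := by
        simp [hS, C.zero_mem]
      have hpos : 0 < S.card := Finset.card_pos.mpr ⟨_, this⟩
      exact_mod_cast hpos.ne'
    have hscal : r ^ n * (S.card : ℂ) = 1 := by
      rw [hr, inv_pow, ← Complex.ofReal_pow, hsqn]
      push_cast
      field_simp
    -- per-term product expansion
    have hcv : ∀ (c v : Fin n → F),
        ∏ i, (MvPolynomial.C (chi (c i * v i)) * MvPolynomial.X (v i))
          = MvPolynomial.C (chi (∑ i, c i * v i)) * ∏ i, MvPolynomial.X (v i) := by
      intro c v
      rw [Finset.prod_mul_distrib, ← map_prod, ← chi_sum]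
    calc macWilliams F (cwe C)
        = ∑ c ∈ S, ∏ i, (MvPolynomial.C r *
            ∑ b : F, MvPolynomial.C (chi (c i * b)) * MvPolynomial.X b) := by
          rw [cwe, map_sum]
          refine Finset.sum_congr rfl fun c _ => ?_
          rw [map_prod]
          refine Finset.prod_congr rfl fun i _ => ?_
          simp only [macWilliams, aeval_X, chi_def, hr, Complex.ofReal_natCast]
      _ = ∑ c ∈ S, MvPolynomial.C r ^ n *
            ∑ v : Fin n → F, ∏ i, (MvPolynomial.C (chi (c i * v i)) *
              MvPolynomial.X (v i)) := by
          refine Finset.sum_congr rfl fun c _ => ?_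
          rw [Finset.prod_mul_distrib, Finset.prod_const, Finset.card_univ, Fintype.card_fin,
            Finset.prod_univ_sum, Fintype.piFinset_univ]
      _ = MvPolynomial.C r ^ n * ∑ v : Fin n → F,
            (∑ c ∈ S, MvPolynomial.C (chi (∑ i, c i * v i))) *
              ∏ i, MvPolynomial.X (v i) := by
          simp_rw [hcv]
          rw [← Finset.mul_sum, Finset.sum_comm]
          congr 1
          refine Finset.sum_congr rfl fun v _ => ?_
          rw [← Finset.sum_mul]
      _ = MvPolynomial.C r ^ n * (MvPolynomial.C ((S.card : ℂ)) * cwe C) := by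
          congr 1
          rw [cwe, Finset.mul_sum, ← hS]
          rw [Finset.sum_filter]
          refine Finset.sum_congr rfl fun v _ => ?_
          rw [← map_sum, hA v, apply_ite MvPolynomial.C, map_zero, ite_mul, zero_mul]
      _ = cwe C := by
          rw [← mul_assoc, ← map_pow, ← map_mul, hscal, map_one, one_mul]
  · -- invariance under m_r
    intro r hr
    rw [cwe, map_sum, ← hS]
    refine Finset.sum_nbij' (i := fun c => r • c) (j := fun c => r⁻¹ • c) ?_ ?_ ?_ ?_ ?_
    · intro a ha
      simp only [hS, Finset.mem_filter, Finset.mem_univ, true_and] at ha ⊢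
      exact C.smul_mem _ ha
    · intro a ha
      simp only [hS, Finset.mem_filter, Finset.mem_univ, true_and] at ha ⊢
      exact C.smul_mem _ ha
    · intro a _; simp [smul_smul, inv_mul_cancel₀ hr]
    · intro a _; simp [smul_smul, mul_inv_cancel₀ hr]
    · intro a _
      rw [map_prod]
      refine Finset.prod_congr rfl fun i _ => ?_
      rw [aeval_X]
      simp [mul_comm]
end

section
/- In the Clifford-Weil group setup, the operators d_r² and q_r = h d_r² h⁻¹ act on variables by d_r²(x_a) = (-1)^{τ(ar)} x_a and q_r(x_a) = x_{a+r}, and they satisfy the commutation relation q_r d_s² = (-1)^{τ(rs)} d_s² q_r for all r, s ∈ F. -/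
/-!
Let `ψ x = (-1) ^ τ(x)`; it is a primitive additive character of `F` because the trace form is
nondegenerate. Then `h` is `|F|^(-1/2)` times the character transform
`T v d = ∑ a, ψ (a * d) * v a`, and `d_r²` is multiplication by `ψ (· * r)`, since `φ ≡ τ mod 2`
for a self-complementary basis. Orthogonality of characters gives `T² = |F| • (v ↦ v ∘ neg)` and
`ψ (· * r) * T v = T (v ∘ (· - r))`; in characteristic 2 this makes `h` an involution and `q_r` the
translation `v ↦ v (· + r)`, which commutes with `d_s²` up to `ψ (r * s)` because
`ψ ((a + r) * s) = ψ (r * s) * ψ (a * s)`.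
-/

open Finset

section SingleBasis

variable {𝕜 : Type*} [CommSemiring 𝕜] {ι : Type*} [DecidableEq ι]

lemma LinearMap.mulLeft_single (g : ι → 𝕜) (a : ι) :
    LinearMap.mulLeft 𝕜 g (Pi.single a 1) = g a • Pi.single a 1 := by
  ext d
  rcases eq_or_ne d a with rfl | hda <;> simp [*]

lemma LinearMap.funLeft_add_single {R : Type*} [AddGroup R] [DecidableEq R] (r a : R) :
    LinearMap.funLeft 𝕜 𝕜 (· + r) (Pi.single a (1 : 𝕜)) = Pi.single (a - r) 1 := by
  ext d
  simp [LinearMap.funLeft_apply, Pi.single_apply, eq_sub_iff_add_eq]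

lemma LinearMap.eq_mulLeft_of_apply_single [Finite ι] {T : (ι → 𝕜) →ₗ[𝕜] (ι → 𝕜)} {g : ι → 𝕜}
    (hT : ∀ a, T (Pi.single a 1) = g a • Pi.single a 1) : T = LinearMap.mulLeft 𝕜 g :=
  LinearMap.pi_ext' fun a => LinearMap.ext_ring <| (hT a).trans (LinearMap.mulLeft_single g a).symm

end SingleBasis

namespace AddChar

variable {R : Type*} [CommRing R]

lemma funLeft_add_comp_mulLeft (ψ : AddChar R ℂ) (r s : R) :
    LinearMap.funLeft ℂ ℂ (· + r) ∘ₗ LinearMap.mulLeft ℂ (fun a => ψ (a * s)) =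
      ψ (r * s) • (LinearMap.mulLeft ℂ (fun a => ψ (a * s)) ∘ₗ LinearMap.funLeft ℂ ℂ (· + r)) := by
  refine LinearMap.ext fun v => funext fun d => ?_
  simp [add_mul, map_add_eq_mul]
  ring

variable [Fintype R]

def transform (ψ : AddChar R ℂ) : (R → ℂ) →ₗ[ℂ] (R → ℂ) where
  toFun v d := ∑ a, ψ (a * d) * v a
  map_add' v w := by ext d; simp [mul_add, sum_add_distrib]
  map_smul' c v := by ext d; simp [mul_sum, mul_left_comm]

@[simp] lemma transform_apply (ψ : AddChar R ℂ) (v : R → ℂ) (d : R) :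
    ψ.transform v d = ∑ a, ψ (a * d) * v a := rfl

lemma transform_single [DecidableEq R] (ψ : AddChar R ℂ) (a : R) :
    ψ.transform (Pi.single a 1) = fun d => ψ (a * d) := by
  ext d; simp [Pi.single_apply]

lemma eq_smul_transform [DecidableEq R] {ψ : AddChar R ℂ} {T : (R → ℂ) →ₗ[ℂ] (R → ℂ)} {c : ℂ}
    (hT : ∀ a, T (Pi.single a 1) = c • ∑ b, ψ (a * b) • Pi.single b 1) : T = c • ψ.transform :=
  LinearMap.pi_ext' fun a => LinearMap.ext_ring <| by
    ext d
    simp [hT, transform_single, Finset.sum_apply, Pi.single_apply]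

lemma transform_comp_transform [DecidableEq R] {ψ : AddChar R ℂ} (hψ : ψ.IsPrimitive) :
    ψ.transform ∘ₗ ψ.transform = (Fintype.card R : ℂ) • LinearMap.funLeft ℂ ℂ Neg.neg := by
  refine LinearMap.ext fun v => funext fun d => ?_
  calc ∑ a, ψ (a * d) * ∑ c, ψ (c * a) * v c
      = ∑ c, v c * ∑ a, ψ (a * (c + d)) := by
        simp only [mul_sum, mul_add, map_add_eq_mul]
        rw [sum_comm]
        refine sum_congr rfl fun c _ => sum_congr rfl fun a _ => ?_
        ring_nf
    _ = ∑ c, v c * if c + d = 0 then (Fintype.card R : ℂ) else 0 := by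
        simp only [sum_mulShift _ hψ]
        push_cast
        rfl
    _ = (Fintype.card R : ℂ) * v (-d) := by
        simp [add_eq_zero_iff_eq_neg, mul_comm]

lemma mulLeft_comp_transform (ψ : AddChar R ℂ) (r : R) :
    LinearMap.mulLeft ℂ (fun a => ψ (a * r)) ∘ₗ ψ.transform =
      ψ.transform ∘ₗ LinearMap.funLeft ℂ ℂ (· - r) := by
  refine LinearMap.ext fun v => funext fun d => ?_
  calc ψ (d * r) * ∑ a, ψ (a * d) * v a
      = ∑ a, ψ ((a + r) * d) * v a := by
        simp only [mul_sum, add_mul, map_add_eq_mul]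
        refine sum_congr rfl fun a _ => ?_
        ring_nf
    _ = ∑ a, ψ (a * d) * v (a - r) :=
        Fintype.sum_equiv (Equiv.addRight r) _ _ fun a => by simp

lemma transform_comp_mulLeft_comp_transform [DecidableEq R] {ψ : AddChar R ℂ}
    (hψ : ψ.IsPrimitive) (r : R) :
    ψ.transform ∘ₗ LinearMap.mulLeft ℂ (fun a => ψ (a * r)) ∘ₗ ψ.transform =
      (Fintype.card R : ℂ) • LinearMap.funLeft ℂ ℂ (fun d => -d - r) := by
  rw [mulLeft_comp_transform, ← LinearMap.comp_assoc, transform_comp_transform hψ,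
    LinearMap.smul_comp, ← LinearMap.funLeft_comp]
  rfl

end AddChar

lemma Complex.inv_sqrt_mul_inv_sqrt_mul_self {x : ℝ} (hx : 0 < x) :
    (√x : ℂ)⁻¹ * (√x : ℂ)⁻¹ * x = 1 := by
  rw [← mul_inv, ← ofReal_mul, Real.mul_self_sqrt hx.le, inv_mul_cancel₀ (by exact_mod_cast hx.ne')]

lemma Algebra.trace_pow_card_eq_trace (K L : Type*) [Field K] [Fintype K] [Field L] [Algebra K L]
    [Algebra.IsAlgebraic K L] (x : L) :
    Algebra.trace K L (x ^ Fintype.card K) = Algebra.trace K L x :=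
  Algebra.trace_eq_of_algEquiv (FiniteField.frobeniusAlgEquivOfAlgebraic K L) x

section TraceSign

variable (F : Type*) [CommRing F] [Algebra (ZMod 2) F]

noncomputable def traceSignChar : AddChar F ℂ :=
  (AddChar.zmodChar 2 (by norm_num : (-1 : ℂ) ^ 2 = 1)).compAddMonoidHom
    (Algebra.trace (ZMod 2) F).toAddMonoidHom

lemma traceSignChar_apply (x : F) :
    traceSignChar F x = (-1) ^ (Algebra.trace (ZMod 2) F x).val := rfl

end TraceSign

lemma traceSignChar_isPrimitive (F : Type*) [Field F] [Finite F] [Algebra (ZMod 2) F] :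
    (traceSignChar F).IsPrimitive := by
  refine AddChar.IsPrimitive.of_ne_one fun h => ?_
  obtain ⟨c, hc⟩ : ∃ c, Algebra.trace (ZMod 2) F (1 * c) ≠ 0 := by
    by_contra! h0
    exact one_ne_zero ((traceForm_nondegenerate (ZMod 2) F).1 1 h0)
  have : traceSignChar F c = 1 := by rw [h]; rfl
  rw [traceSignChar_apply] at this
  rw [one_mul] at hc
  generalize Algebra.trace (ZMod 2) F c = u at hc this
  fin_cases u
  · exact hc rfl
  · change (-1 : ℂ) ^ 1 = 1 at this
    norm_num at this

lemma neg_one_pow_val_natCast {m : ℕ} (hm : 2 ∣ m) (n : ℕ) :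
    (-1 : ℂ) ^ (n : ZMod m).val = (-1) ^ n := by
  rw [ZMod.val_natCast, neg_one_pow_eq_pow_mod_two, Nat.mod_mod_of_dvd n hm,
    ← neg_one_pow_eq_pow_mod_two]

section SelfDualBasis

variable {F : Type*} [Field F] [Finite F] [Algebra (ZMod 2) F] {ι : Type*} [Fintype ι]
  (b : Module.Basis ι (ZMod 2) F)

lemma Module.Basis.trace_eq_sum_repr (hb : ∀ i, Algebra.trace (ZMod 2) F (b i * b i) = 1) (x : F) :
    Algebra.trace (ZMod 2) F x = ∑ i, b.repr x i := by
  have htr : ∀ i, Algebra.trace (ZMod 2) F (b i) = 1 := fun i => by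
    have := Algebra.trace_pow_card_eq_trace (ZMod 2) F (b i)
    rwa [ZMod.card, sq, hb, eq_comm] at this
  conv_lhs => rw [← b.sum_repr x, map_sum]
  simp only [map_smul, htr, smul_eq_mul, mul_one]

lemma Module.Basis.neg_one_pow_weight (hb : ∀ i, Algebra.trace (ZMod 2) F (b i * b i) = 1) (x : F) :
    (-1 : ℂ) ^ (∑ i, ((b.repr x i).val : ZMod 4)).val = traceSignChar F x := by
  rw [traceSignChar_apply, b.trace_eq_sum_repr hb, ← Nat.cast_sum,
    neg_one_pow_val_natCast (by norm_num)]
  conv_rhs => rw [show ∑ i, b.repr x i = ((∑ i, (b.repr x i).val : ℕ) : ZMod 2) by simp]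
  rw [neg_one_pow_val_natCast dvd_rfl]

end SelfDualBasis

theorem stmt_17_general {F : Type*} [Field F] [Fintype F] [DecidableEq F] [Algebra (ZMod 2) F]
    {f : ℕ}
    (b : Module.Basis (Fin f) (ZMod 2) F)
    (hb : ∀ i j, Algebra.trace (ZMod 2) F (b i * b j) = if i = j then 1 else 0)
    (φ : F → ZMod 4)
    (hφ : ∀ a, φ a = ∑ i, ((b.repr a i).val : ZMod 4))
    -- the basis vector `x_a` of the space spanned by the variables
    (e : F → F → ℂ) (he : ∀ a c, e a c = if c = a then 1 else 0)
    -- the MacWilliams transformation `h`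
    (hOp : (F → ℂ) →ₗ[ℂ] (F → ℂ))
    (hh : ∀ a, hOp (e a) = ((Real.sqrt (Fintype.card F) : ℂ))⁻¹ •
      ∑ c : F, ((-1 : ℂ) ^ (Algebra.trace (ZMod 2) F (a * c)).val) • e c)
    -- the diagonal operators `d_r`
    (dOp : F → (F → ℂ) →ₗ[ℂ] (F → ℂ))
    (hd : ∀ r a, dOp r (e a) = (Complex.I ^ (φ (a * r)).val) • e a)
    -- `q_r := h d_r² h⁻¹`  (here `h⁻¹ = h`, as asserted in the first conclusion)
    (qOp : F → (F → ℂ) →ₗ[ℂ] (F → ℂ))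
    (hq : ∀ r, qOp r = hOp ∘ₗ (dOp r ∘ₗ dOp r) ∘ₗ hOp) :
    (hOp ∘ₗ hOp = LinearMap.id) ∧
    (∀ r a, (dOp r ∘ₗ dOp r) (e a) =
      ((-1 : ℂ) ^ (Algebra.trace (ZMod 2) F (a * r)).val) • e a) ∧
    (∀ r a, qOp r (e a) = e (a + r)) ∧
    (∀ r s, qOp r ∘ₗ (dOp s ∘ₗ dOp s) =
      ((-1 : ℂ) ^ (Algebra.trace (ZMod 2) F (r * s)).val) • ((dOp s ∘ₗ dOp s) ∘ₗ qOp r)) := by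
  have : CharP F 2 := charP_of_injective_algebraMap' (ZMod 2) 2
  have hψ := traceSignChar_isPrimitive F
  obtain rfl : e = fun a => Pi.single a 1 :=
    funext fun a => funext fun c => by simp [he, Pi.single_apply]
  have hs := Complex.inv_sqrt_mul_inv_sqrt_mul_self (x := Fintype.card F) (by exact_mod_cast Fintype.card_pos)
  rw [Complex.ofReal_natCast] at hs
  have hh' : hOp = _ • (traceSignChar F).transform := AddChar.eq_smul_transform hh
  have hdd : ∀ r, dOp r ∘ₗ dOp r = LinearMap.mulLeft ℂ (fun a => traceSignChar F (a * r)) :=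
    fun r => LinearMap.eq_mulLeft_of_apply_single fun a => by
      rw [LinearMap.comp_apply, hd, map_smul, hd, smul_smul, ← mul_pow, Complex.I_mul_I, hφ,
        b.neg_one_pow_weight fun i => by simp [hb]]
  have hq' : ∀ r, qOp r = LinearMap.funLeft ℂ ℂ (· + r) := fun r => by
    rw [hq, hdd, hh', LinearMap.smul_comp, LinearMap.comp_smul, LinearMap.comp_smul, smul_smul,
      AddChar.transform_comp_mulLeft_comp_transform hψ, smul_smul, hs, one_smul]
    simp only [CharTwo.neg_eq, CharTwo.sub_eq_add]
  refine ⟨?_, fun r a => ?_, fun r a => ?_, fun r s => ?_⟩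
  · rw [hh', LinearMap.smul_comp, LinearMap.comp_smul, smul_smul,
      AddChar.transform_comp_transform hψ, smul_smul, hs, one_smul]
    simp only [CharTwo.neg_eq']
    rfl
  · rw [hdd, LinearMap.mulLeft_single, traceSignChar_apply]
  · rw [hq', LinearMap.funLeft_add_single, CharTwo.sub_eq_add]
  · rw [hq', hdd]
    exact AddChar.funLeft_add_comp_mulLeft _ r s

theorem stmt_17 {F : Type*} [Field F] [Fintype F] [DecidableEq F] [Algebra (ZMod 2) F]
    {f : ℕ} (hcard : Fintype.card F = 2 ^ f)
    (b : Module.Basis (Fin f) (ZMod 2) F)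
    (hb : ∀ i j, Algebra.trace (ZMod 2) F (b i * b j) = if i = j then 1 else 0)
    (φ : F → ZMod 4)
    (hφ : ∀ a, φ a = ∑ i, ((b.repr a i).val : ZMod 4))
    -- the basis vector `x_a` of the space spanned by the variables
    (e : F → F → ℂ) (he : ∀ a c, e a c = if c = a then 1 else 0)
    -- the MacWilliams transformation `h`
    (hOp : (F → ℂ) →ₗ[ℂ] (F → ℂ))
    (hh : ∀ a, hOp (e a) = ((Real.sqrt (Fintype.card F) : ℂ))⁻¹ •
      ∑ c : F, ((-1 : ℂ) ^ (Algebra.trace (ZMod 2) F (a * c)).val) • e c)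
    -- the diagonal operators `d_r`
    (dOp : F → (F → ℂ) →ₗ[ℂ] (F → ℂ))
    (hd : ∀ r a, dOp r (e a) = (Complex.I ^ (φ (a * r)).val) • e a)
    -- `q_r := h d_r² h⁻¹`  (here `h⁻¹ = h`, as asserted in the first conclusion)
    (qOp : F → (F → ℂ) →ₗ[ℂ] (F → ℂ))
    (hq : ∀ r, qOp r = hOp ∘ₗ (dOp r ∘ₗ dOp r) ∘ₗ hOp) :
    (hOp ∘ₗ hOp = LinearMap.id) ∧
    (∀ r a, (dOp r ∘ₗ dOp r) (e a) =
      ((-1 : ℂ) ^ (Algebra.trace (ZMod 2) F (a * r)).val) • e a) ∧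
    (∀ r a, qOp r (e a) = e (a + r)) ∧
    (∀ r s, qOp r ∘ₗ (dOp s ∘ₗ dOp s) =
      ((-1 : ℂ) ^ (Algebra.trace (ZMod 2) F (r * s)).val) • ((dOp s ∘ₗ dOp s) ∘ₗ qOp r)) :=
  stmt_17_general b hb φ hφ e he hOp hh dOp hd qOp hq
end
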